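/- Let $\{Y_n\}_{n\in\mathbb{N}}$ be a sequence of positive real numbers, bounded above by some constant $M$, satisfying the reverse recursive inequality $Y_n \le C b^n Y_{n+1}^{1-\alpha}$ for all $n$, where $\alpha \in (0,1)$ and $C, b > 1$. Then $Y_0 \le \left( \frac{2C}{b^{1-1/\alpha}} \right)^{1/\alpha}$. -/

import Mathlib

/-!
Taking logarithms turns the hypothesis into the affine reverse recursion
`y n ≤ a + n ℓ + r y (n + 1)` with `y = log Y`, `r = 1 - α`, `a = log C`, `ℓ = log b`.
Equality holds along the line `k + n ℓ / (1 - r)` with `k = (a + r ℓ / (1 - r)) / (1 - r)`,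
so if `y 0` lay above `k`, every `y n` would lie above that line, which tends to infinity
since `ℓ > 0`; this contradicts `Y n ≤ M`. Hence `log Y 0 ≤ k`, and the factor `2` in the
stated bound is slack.
-/

open Real

theorem lt_of_reverse_linear_recursion {y : ℕ → ℝ} {a ℓ r : ℝ} (hr0 : 0 < r) (hr1 : r ≠ 1)
    (hrec : ∀ n, y n ≤ a + n * ℓ + r * y (n + 1))
    (h0 : (a + r * ℓ / (1 - r)) / (1 - r) < y 0) (n : ℕ) :
    (a + r * ℓ / (1 - r)) / (1 - r) + n * ℓ / (1 - r) < y n := by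
  induction n with
  | zero => simpa using h0
  | succ n ih =>
    have hs : 1 - r ≠ 0 := sub_ne_zero.mpr hr1.symm
    have hline : r * ((a + r * ℓ / (1 - r)) / (1 - r) + (n + 1 : ℕ) * ℓ / (1 - r)) =
        (a + r * ℓ / (1 - r)) / (1 - r) + n * ℓ / (1 - r) - a - n * ℓ := by
      field_simp
      push_cast
      ring
    refine lt_of_mul_lt_mul_left ?_ hr0.le
    linarith [hrec n]

theorem le_of_reverse_linear_recursion {y : ℕ → ℝ} {a ℓ r : ℝ} (hr0 : 0 < r) (hr1 : r < 1)
    (hℓ : 0 < ℓ) (hbdd : BddAbove (Set.range y))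
    (hrec : ∀ n, y n ≤ a + n * ℓ + r * y (n + 1)) :
    y 0 ≤ (a + r * ℓ / (1 - r)) / (1 - r) := by
  by_contra! h0
  obtain ⟨B, hB⟩ := hbdd
  obtain ⟨n, hn⟩ := exists_nat_gt ((B - (a + r * ℓ / (1 - r)) / (1 - r)) * (1 - r) / ℓ)
  have hgrow := lt_of_reverse_linear_recursion hr0 hr1.ne hrec h0 n
  have hline_gt : B - (a + r * ℓ / (1 - r)) / (1 - r) < n * ℓ / (1 - r) := by
    rw [div_lt_iff₀ hℓ] at hn
    rw [lt_div_iff₀ (sub_pos.mpr hr1)]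
    linarith
  linarith [hB ⟨n, rfl⟩]

theorem reverse_iteration_lemma_general
    (Y : ℕ → ℝ) (C b α M : ℝ)
    (hC : 1 < C) (hb : 1 < b) (hα : α ∈ Set.Ioo (0:ℝ) 1)
    (hbound : ∀ n, 0 < Y n ∧ Y n ≤ M)
    (hrec : ∀ n, Y n ≤ C * b ^ n * (Y (n + 1)) ^ (1 - α)) :
    Y 0 ≤ (2 * C / b ^ (1 - 1 / α)) ^ (1 / α) := by
  obtain ⟨hα0, hα1⟩ := hα
  have hlogrec (n : ℕ) : log (Y n) ≤ log C + n * log b + (1 - α) * log (Y (n + 1)) := by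
    have hYsucc := (hbound (n + 1)).1
    calc log (Y n) ≤ log (C * b ^ n * Y (n + 1) ^ (1 - α)) := log_le_log (hbound n).1 (hrec n)
      _ = _ := by
        rw [log_mul (by positivity) (by positivity), log_mul (by positivity) (by positivity),
          log_pow, log_rpow hYsucc]
  have hbdd : BddAbove (Set.range fun n ↦ log (Y n)) :=
    ⟨log M, by rintro _ ⟨n, rfl⟩; exact log_le_log (hbound n).1 (hbound n).2⟩
  have hlogY0 :=
    le_of_reverse_linear_recursion (by linarith) (by linarith) (log_pos hb) hbdd hlogrec
  rw [sub_sub_cancel] at hlogY0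
  have hlog_rhs : 1 / α * (log (2 * C) - log (b ^ (1 - 1 / α))) =
      (log C + (1 - α) * log b / α) / α + log 2 / α := by
    rw [log_mul two_ne_zero (by positivity), log_rpow (by positivity)]
    field_simp
    ring
  rw [← log_le_log_iff (hbound 0).1 (by positivity), log_rpow (by positivity),
    log_div (by positivity) (by positivity), hlog_rhs]
  have : 0 < log 2 / α := div_pos (log_pos one_lt_two) hα0
  linarith

theorem reverse_iteration_lemma
    (Y : ℕ → ℝ) (C b α M : ℝ)
    (hC : 1 < C) (hb : 1 < b) (hα : α ∈ Set.Ioo (0:ℝ) 1)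
    (hM : 0 < M) (hbound : ∀ n, 0 < Y n ∧ Y n ≤ M)
    (hrec : ∀ n, Y n ≤ C * b ^ n * (Y (n + 1)) ^ (1 - α)) :
    Y 0 ≤ (2 * C / b ^ (1 - 1 / α)) ^ (1 / α) :=
  reverse_iteration_lemma_general Y C b α M hC hb hα hbound hrec
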